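/- Let λ = (k, −l) ∈ ℤ². For every m ∈ ℤ, x(m)(λ) = (p(m+1), −p(m)) if m is even, and x(m)(λ) = (−p(m), p(m+1)) if m is odd. -/

import Mathlib

/-- Simple reflection `r1 : (x, y) ↦ (-x, y + b x)` on the weight lattice `ℤ × ℤ`. -/
def r1 (b : ℤ) : Equiv.Perm (ℤ × ℤ) :=
  Function.Involutive.toPerm (fun v => (-v.1, v.2 + b * v.1))
    (fun v => by simp [Prod.ext_iff])

/-- Simple reflection `r2 : (x, y) ↦ (x + a y, -y)` on the weight lattice `ℤ × ℤ`. -/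
def r2 (a : ℤ) : Equiv.Perm (ℤ × ℤ) :=
  Function.Involutive.toPerm (fun v => (v.1 + a * v.2, -v.2))
    (fun v => by simp [Prod.ext_iff])

/-- The Weyl group `W`, the group of bijections of `ℤ × ℤ` generated by `r1` and `r2`. -/
def W (a b : ℤ) : Subgroup (Equiv.Perm (ℤ × ℤ)) :=
  Subgroup.closure {r1 b, r2 a}

/-- The `W`-orbit of a point `v ∈ ℤ × ℤ`. -/
def Worbit (a b : ℤ) (v : ℤ × ℤ) : Set (ℤ × ℤ) :=
  {w : ℤ × ℤ | ∃ g ∈ W a b, g v = w}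

/-- The set of dominant integral weights `P⁺`. -/
def Pplus : Set (ℤ × ℤ) := {v : ℤ × ℤ | 0 ≤ v.1 ∧ 0 ≤ v.2}

/-- The set of antidominant integral weights `-P⁺`. -/
def Pminus : Set (ℤ × ℤ) := {v : ℤ × ℤ | v.1 ≤ 0 ∧ v.2 ≤ 0}


/-- `pSeq a b k l p` says that `p : ℤ → ℤ` is the (unique) sequence with `p 0 = l`,
`p 1 = k`, and `p (m+2) = b * p (m+1) - p m` for even `m`,
`p (m+2) = a * p (m+1) - p m` for odd `m`. -/
def pSeq (a b k l : ℤ) (p : ℤ → ℤ) : Prop :=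
  p 0 = l ∧ p 1 = k ∧
    ∀ m : ℤ, p (m + 2) = (if Even m then b else a) * p (m + 1) - p m

/-! Each reflection changes one coordinate of a weight `(u, v)` to `a v - u` or `b u - v`, which is
exactly one step of the recurrence for `p`; so the claimed weights obey the same one-step recursion
as `x m (k, -l)`, and the two agree at `m = 0`. -/

@[simp]
lemma r1_apply (b : ℤ) (v : ℤ × ℤ) : r1 b v = (-v.1, v.2 + b * v.1) := rfl

@[simp]
lemma r2_apply (a : ℤ) (v : ℤ × ℤ) : r2 a v = (v.1 + a * v.2, -v.2) := rfl

lemma Equiv.Perm.apply_eq_of_forall_eq_mul {α : Type*} (g x : ℤ → Equiv.Perm α) (v : ℤ → α)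
    (v₀ : α) (hx : ∀ m, x m = g m * x (m - 1)) (hv : ∀ m, v m = g m (v (m - 1)))
    (h₀ : x 0 v₀ = v 0) (m : ℤ) : x m v₀ = v m := by
  induction m using Int.induction_on with
  | zero => exact h₀
  | succ n ih => rw [hx, hv, Equiv.Perm.mul_apply, add_sub_cancel_right, ih]
  | pred n ih =>
    rw [hx, hv, Equiv.Perm.mul_apply] at ih
    exact (g _).injective ih

def weightSeq (p : ℤ → ℤ) (m : ℤ) : ℤ × ℤ :=
  if Even m then (p (m + 1), -p m) else (-p m, p (m + 1))

lemma weightSeq_eq_reflection_apply {a b k l : ℤ} {p : ℤ → ℤ} (hp : pSeq a b k l p) (m : ℤ) :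
    weightSeq p m = (if Even m then r2 a else r1 b) (weightSeq p (m - 1)) := by
  have hrec := hp.2.2 (m - 1)
  rw [sub_add_cancel, show m - 1 + 2 = m + 1 by ring] at hrec
  by_cases hm : Even m
  · have hm' : ¬Even (m - 1) := Int.even_sub_one.not.mpr (not_not.mpr hm)
    simp only [weightSeq, hm, hm', if_true, if_false, sub_add_cancel, r2_apply] at hrec ⊢
    rw [hrec]; ring_nf
  · have hm' : Even (m - 1) := Int.even_sub_one.mpr hm
    simp only [weightSeq, hm, hm', if_true, if_false, sub_add_cancel, r1_apply] at hrec ⊢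
    rw [hrec]; ring_nf

theorem xm_apply_general (a b : ℤ)
    (k l : ℤ) (p : ℤ → ℤ) (hp : pSeq a b k l p)
    (x : ℤ → Equiv.Perm (ℤ × ℤ)) (hx0 : x 0 = 1)
    (hx : ∀ m : ℤ, x m = (if Even m then r2 a else r1 b) * x (m - 1)) :
    ∀ m : ℤ,
      x m (k, -l) = if Even m then (p (m + 1), -p m) else (-p m, p (m + 1)) := by
  refine Equiv.Perm.apply_eq_of_forall_eq_mul _ x (weightSeq p) _ hx
    (weightSeq_eq_reflection_apply hp) ?_
  simp [weightSeq, hx0, hp.1, hp.2.1]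

theorem xm_apply (a b : ℤ) (ha : 2 ≤ a) (hb : 2 ≤ b) (hab : 4 < a * b)
    (k l : ℤ) (p : ℤ → ℤ) (hp : pSeq a b k l p)
    (x : ℤ → Equiv.Perm (ℤ × ℤ)) (hx0 : x 0 = 1)
    (hx : ∀ m : ℤ, x m = (if Even m then r2 a else r1 b) * x (m - 1)) :
    ∀ m : ℤ,
      x m (k, -l) = if Even m then (p (m + 1), -p m) else (-p m, p (m + 1)) :=
  xm_apply_general a b k l p hp x hx0 hx
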